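/- Let p > 3 be a prime. The number of distinct sets among the Ω_k^p, k ∈ ℤ/pℤ \ {0,-1}, that have cardinality 6 is (p-7)/6 if p ≡ 1 (mod 3), and (p-5)/6 if p ≡ -1 (mod 3). (With p = 2g+1, this is the count of isolated singular points of the moduli space M_g for g ≥ 4.) -/

import Mathlib

/-- `Ω_k^p := {k, -1-k, k⁻¹, -1-k⁻¹, -(k+1)⁻¹, (k+1)⁻¹ - 1} ⊆ ℤ/pℤ`. -/
def Omega (p : ℕ) (k : ZMod p) : Finset (ZMod p) :=
  {k, -1 - k, k⁻¹, -1 - k⁻¹, -(k + 1)⁻¹, (k + 1)⁻¹ - 1}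

/-- The index set `ℤ/pℤ \ {0, -1}` as a finset. -/
def indexSet (p : ℕ) [NeZero p] : Finset (ZMod p) :=
  Finset.univ.filter (fun k => k ≠ 0 ∧ k ≠ -1)

/-!
The six elements of `Ω_k^p` are the images of `k` under the anharmonic group `≅ S₃` generated by
`k ↦ -1 - k` and `k ↦ k⁻¹`, which acts on `ℤ/pℤ \ {0, -1}`; so the `Ω_k^p` are its orbits and they
partition the index set. An orbit has fewer than six elements exactly when `k` is fixed by a
non-identity element: `k = 1, -2, -1/2` (fixed by the three involutions) or `k² + k + 1 = 0`
(fixed by the 3-cycles). The latter are the primitive cube roots of unity, of which there are two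
if `3 ∣ p - 1` and none otherwise. Hence `6 · #{six-element orbits} = (p - 2) - 5` or `(p - 2) - 3`.
-/

open Finset

theorem card_eq_mul_card_image_of_partition {α : Type*} [DecidableEq α] {s : Finset α}
    {f : α → Finset α} {n : ℕ} (h_mem : ∀ a ∈ s, a ∈ f a) (h_sub : ∀ a ∈ s, f a ⊆ s)
    (h_eq : ∀ a ∈ s, ∀ b ∈ f a, f b = f a) (h_card : ∀ a ∈ s, #(f a) = n) :
    #s = n * #(s.image f) := by
  rw [card_eq_sum_card_image f s, mul_comm, ← smul_eq_mul, ← sum_const]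
  refine sum_congr rfl fun t ht => ?_
  obtain ⟨a, ha, rfl⟩ := mem_image.mp ht
  have hfiber : {b ∈ s | f b = f a} = f a := by
    ext b
    simp only [mem_filter]
    exact ⟨fun ⟨hb, hfb⟩ => hfb ▸ h_mem b hb, fun hb => ⟨h_sub a ha hb, h_eq a ha b hb⟩⟩
  rw [hfiber, h_card a ha]

theorem card_primitiveRoots_of_finite {K : Type*} [Field K] [Fintype K] {n : ℕ} (hn : 0 < n) :
    #(primitiveRoots n K) = if n ∣ Fintype.card K - 1 then n.totient else 0 := by
  classical
  split_ifs with hdvd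
  · rw [← Fintype.card_units] at hdvd
    obtain ⟨u, hu⟩ : ∃ u : Kˣ, orderOf u = n := by
      obtain ⟨u, hu⟩ := card_pos.mp
        (IsCyclic.card_orderOf_eq_totient hdvd ▸ Nat.totient_pos.mpr hn)
      exact ⟨u, (mem_filter.mp hu).2⟩
    exact (IsPrimitiveRoot.coe_units_iff.mpr (hu ▸ IsPrimitiveRoot.orderOf u)).card_primitiveRoots
  · refine card_eq_zero.mpr (eq_empty_of_forall_notMem fun ζ hζ => hdvd ?_)
    have hζ := (mem_primitiveRoots hn).mp hζ
    exact (hζ.pow_eq_one_iff_dvd _).mp (FiniteField.pow_card_sub_one_eq_one ζ (hζ.ne_zero hn.ne'))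

theorem ZMod.natCast_ne_zero_of_lt {n a : ℕ} (ha : a ≠ 0) (h : a < n) : (a : ZMod n) ≠ 0 :=
  fun h0 => ha (Nat.eq_zero_of_dvd_of_lt ((ZMod.natCast_eq_zero_iff a n).mp h0) h)

section Field

variable {K : Type*} [Field K]

theorem isPrimitiveRoot_three_iff {k : K} (h3 : (3 : K) ≠ 0) :
    IsPrimitiveRoot k 3 ↔ k ^ 2 + k + 1 = 0 := by
  have : NeZero ((3 : ℕ) : K) := ⟨by exact_mod_cast h3⟩
  simp [← Polynomial.isRoot_cyclotomic_iff, Polynomial.cyclotomic_three]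

/-- The points with a nontrivial stabilizer in the anharmonic group. -/
def IsExceptional (k : K) : Prop :=
  k = 1 ∨ k = -2 ∨ 2 * k + 1 = 0 ∨ k ^ 2 + k + 1 = 0

instance [DecidableEq K] : DecidablePred (IsExceptional (K := K)) :=
  fun k => by unfold IsExceptional; infer_instance

theorem IsExceptional.ne_zero {k : K} (h2 : (2 : K) ≠ 0) (hk : IsExceptional k) : k ≠ 0 := by
  rintro rfl
  rcases hk with h | h | h | h <;> grind

theorem IsExceptional.ne_neg_one {k : K} (h2 : (2 : K) ≠ 0) (hk : IsExceptional k) : k ≠ -1 := by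
  rintro rfl
  rcases hk with h | h | h | h <;> grind

theorem filter_isExceptional [Fintype K] [DecidableEq K] (h2 : (2 : K) ≠ 0) (h3 : (3 : K) ≠ 0) :
    ({k | IsExceptional k} : Finset K) = {1, -2, -2⁻¹} ∪ primitiveRoots 3 K := by
  ext k
  have h2k : 2 * k + 1 = 0 ↔ k = -2⁻¹ := by
    constructor <;> intro h
    · field_simp; linear_combination h
    · rw [h, mul_neg, mul_inv_cancel₀ h2, neg_add_cancel]
  rw [mem_filter_univ, IsExceptional]
  simp only [mem_union, mem_insert, mem_singleton, mem_primitiveRoots three_pos,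
    isPrimitiveRoot_three_iff h3, h2k, or_assoc]

theorem card_filter_isExceptional [Fintype K] [DecidableEq K] (h2 : (2 : K) ≠ 0)
    (h3 : (3 : K) ≠ 0) : #{k : K | IsExceptional k} = 3 + #(primitiveRoots 3 K) := by
  have h2' : (2 : K)⁻¹ * 2 = 1 := inv_mul_cancel₀ h2
  rw [filter_isExceptional h2 h3, card_union_of_disjoint]
  · rw [card_insert_of_notMem, card_pair]
    · intro h; exact h3 (by linear_combination -2 * h + h2')
    · simp only [mem_insert, mem_singleton, not_or]
      constructor <;> intro h <;> apply h3
      · linear_combination h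
      · linear_combination 2 * h - h2'
  · rw [disjoint_left]
    intro k hk hprim
    have hk3 := (isPrimitiveRoot_three_iff h3).mp ((mem_primitiveRoots three_pos).mp hprim)
    simp only [mem_insert, mem_singleton] at hk
    rcases hk with rfl | rfl | rfl
    · exact h3 (by linear_combination hk3)
    · exact h3 (by linear_combination hk3)
    · exact h3 (by linear_combination 4 * hk3 - (2 * 2⁻¹ - 1) * h2')

def omegaList (k : K) : List K :=
  [k, -1 - k, k⁻¹, -1 - k⁻¹, -(k + 1)⁻¹, (k + 1)⁻¹ - 1]

theorem nodup_omegaList_iff {k : K} (hk0 : k ≠ 0) (hk1 : k ≠ -1) :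
    (omegaList k).Nodup ↔ ¬IsExceptional k := by
  simp only [omegaList, IsExceptional, List.nodup_cons, List.mem_cons, List.not_mem_nil, or_false,
    List.nodup_nil, and_true, not_or, not_false_eq_true]
  constructor
  · rintro ⟨⟨h12, h13, h14, -, -⟩, -, ⟨h34, -, -⟩, -, -⟩
    refine ⟨fun h => h13 (by simp [h]), fun h => h34 (by grind),
      fun h => h12 (by linear_combination h), fun h => h14 (by field_simp; linear_combination h)⟩
  · rintro ⟨n1, n2, n3, n4⟩
    -- each of the 15 coincidences clears to a polynomial equation whose factors are all excluded
    refine ⟨⟨?_, ?_, ?_, ?_, ?_⟩, ⟨?_, ?_, ?_, ?_⟩, ⟨?_, ?_, ?_⟩, ⟨?_, ?_⟩, ?_⟩ <;> grind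

end Field

variable {p : ℕ}

theorem mem_omega_self (k : ZMod p) : k ∈ Omega p k := by
  simp [Omega]

theorem mem_indexSet [NeZero p] {k : ZMod p} : k ∈ indexSet p ↔ k ≠ 0 ∧ k ≠ -1 := by
  simp [indexSet]

variable [Fact p.Prime]

theorem card_indexSet : #(indexSet p) = p - 2 := by
  have h01 : (0 : ZMod p) ≠ -1 := by simp
  have : indexSet p = univ \ {0, -1} := by
    ext k
    simp [mem_indexSet]
  rw [this, card_sdiff_of_subset (subset_univ _), card_univ, ZMod.card, card_pair h01]

theorem omega_eq_toFinset (k : ZMod p) : Omega p k = (omegaList k).toFinset := by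
  simp [Omega, omegaList]

theorem card_omega_eq_six_iff {k : ZMod p} (hk : k ∈ indexSet p) :
    #(Omega p k) = 6 ↔ ¬IsExceptional k := by
  obtain ⟨hk0, hk1⟩ := mem_indexSet.mp hk
  rw [omega_eq_toFinset, ← nodup_omegaList_iff hk0 hk1]
  exact Multiset.toFinset_card_eq_card_iff_nodup (m := (omegaList k : Multiset (ZMod p)))

theorem omega_neg_one_sub (k : ZMod p) : Omega p (-1 - k) = Omega p k := by
  have h1 : (-1 - k)⁻¹ = -(k + 1)⁻¹ := by rw [← inv_neg, neg_add', neg_sub_comm]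
  have h2 : (-1 - k + 1)⁻¹ = -k⁻¹ := by rw [← inv_neg]; ring_nf
  ext x
  simp only [Omega, mem_insert, mem_singleton, h1, h2]
  constructor <;> rintro (h | h | h | h | h | h) <;> simp only [h] <;> ring_nf <;> tauto

theorem omega_inv {k : ZMod p} (hk : k ∈ indexSet p) : Omega p k⁻¹ = Omega p k := by
  obtain ⟨hk0, hk1⟩ := mem_indexSet.mp hk
  have h : (k⁻¹ + 1)⁻¹ = 1 - (k + 1)⁻¹ := by grind
  ext x
  simp only [Omega, mem_insert, mem_singleton, inv_inv, h]
  constructor <;> rintro (h | h | h | h | h | h) <;> simp only [h] <;> ring_nf <;> tauto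

theorem mem_indexSet_of_mem_omega {j k : ZMod p} (hk : k ∈ indexSet p) (hj : j ∈ Omega p k) :
    j ∈ indexSet p := by
  obtain ⟨hk0, hk1⟩ := mem_indexSet.mp hk
  simp only [Omega, mem_insert, mem_singleton] at hj
  rw [mem_indexSet]
  rcases hj with rfl | rfl | rfl | rfl | rfl | rfl <;> grind

theorem omega_eq_of_mem {j k : ZMod p} (hk : k ∈ indexSet p) (hj : j ∈ Omega p k) :
    Omega p j = Omega p k := by
  have hk' : -1 - k ∈ indexSet p := mem_indexSet_of_mem_omega hk (by simp [Omega])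
  have hinv : -(k + 1)⁻¹ = (-1 - k)⁻¹ := by rw [← inv_neg, neg_add', neg_sub_comm]
  simp only [Omega, mem_insert, mem_singleton] at hj
  rcases hj with rfl | rfl | rfl | rfl | rfl | rfl
  · rfl
  · exact omega_neg_one_sub k
  · exact omega_inv hk
  · rw [omega_neg_one_sub, omega_inv hk]
  · rw [hinv, omega_inv hk', omega_neg_one_sub]
  · rw [show (k + 1)⁻¹ - 1 = -1 - (-1 - k)⁻¹ by rw [← hinv]; ring, omega_neg_one_sub,
      omega_inv hk', omega_neg_one_sub]

theorem card_filter_card_omega_eq_six :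
    #{k ∈ indexSet p | #(Omega p k) = 6} = 6 * #{t ∈ (indexSet p).image (Omega p) | #t = 6} := by
  rw [filter_image]
  refine card_eq_mul_card_image_of_partition (fun a _ => mem_omega_self a) ?_ ?_
    (fun a ha => (mem_filter.mp ha).2)
  · intro a ha b hb
    obtain ⟨ha, h6⟩ := mem_filter.mp ha
    exact mem_filter.mpr ⟨mem_indexSet_of_mem_omega ha hb, omega_eq_of_mem ha hb ▸ h6⟩
  · intro a ha b hb
    exact omega_eq_of_mem (mem_filter.mp ha).1 hb

theorem filter_not_card_omega_eq_six (h2 : (2 : ZMod p) ≠ 0) :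
    {k ∈ indexSet p | ¬#(Omega p k) = 6} = ({k | IsExceptional k} : Finset (ZMod p)) := by
  ext k
  rw [mem_filter, mem_filter_univ]
  constructor
  · rintro ⟨hk, h6⟩
    exact not_not.mp (mt (card_omega_eq_six_iff hk).mpr h6)
  · intro h
    have hk : k ∈ indexSet p := mem_indexSet.mpr ⟨h.ne_zero h2, h.ne_neg_one h2⟩
    exact ⟨hk, fun h6 => (card_omega_eq_six_iff hk).mp h6 h⟩

theorem stmt_6 (p : ℕ) [Fact p.Prime] (hp3 : 3 < p) :
    (p % 3 = 1 →
      (((indexSet p).image (Omega p)).filter (fun t => t.card = 6)).card = (p - 7) / 6) ∧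
    (p % 3 = 2 →
      (((indexSet p).image (Omega p)).filter (fun t => t.card = 6)).card = (p - 5) / 6) := by
  have h2 : (2 : ZMod p) ≠ 0 := by exact_mod_cast ZMod.natCast_ne_zero_of_lt two_ne_zero (by omega)
  have h3 : (3 : ZMod p) ≠ 0 := by exact_mod_cast ZMod.natCast_ne_zero_of_lt three_ne_zero hp3
  have hsplit := card_filter_add_card_filter_not (s := indexSet p) (fun k => #(Omega p k) = 6)
  rw [card_filter_card_omega_eq_six, filter_not_card_omega_eq_six h2,
    card_filter_isExceptional h2 h3, card_primitiveRoots_of_finite three_pos, ZMod.card,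
    card_indexSet] at hsplit
  refine ⟨fun hmod => ?_, fun hmod => ?_⟩
  · rw [if_pos (by omega), Nat.totient_prime Nat.prime_three] at hsplit
    omega
  · rw [if_neg (by omega)] at hsplit
    omega
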